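/- Let p be an odd prime such that the class of 2 is a generator of the cyclic group (ℤ/pℤ)^*. Then there exists an irreducible λ-quiddity over ℤ/pℤ of size 3·(p−1)/2 (namely the 2-trinomial minimal solution). -/

import Mathlib

namespace Quiddity

variable {A : Type*} [CommRing A]

/-- `mMat [a₁, …, aₙ]` is the matrix product `[[aₙ,-1],[1,0]] ⋯ [[a₁,-1],[1,0]]`. -/
def mMat : List A → Matrix (Fin 2) (Fin 2) A
  | [] => 1
  | a :: t => mMat t * !![a, -1; 1, 0]

/-- Continuant: `cont [] = K₀ = 1`, `cont [a] = K₁(a) = a`, and the continuant recursion. -/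
def cont : List A → A
  | [] => 1
  | [a] => a
  | a :: b :: t => a * cont (b :: t) - cont t

/-- A λ-quiddity is a tuple with `Mₙ(a₁,…,aₙ) = ± Id`. -/
def IsQuiddity (l : List A) : Prop := mMat l = 1 ∨ mMat l = -1

/-- The sum `⊕` of two tuples (meaningful for tuples of length ≥ 2):
`(a₁,…,aₘ) ⊕ (b₁,…,b_l) = (a₁+b_l, a₂,…,a_{m−1}, aₘ+b₁, b₂,…,b_{l−1})`. -/
def oplus (la lb : List A) : List A :=
  (la.headD 0 + lb.getLastD 0) ::
    (la.tail.dropLast ++ (la.getLastD 0 + lb.headD 0) :: lb.tail.dropLast)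

/-- Two tuples are equivalent if one is a cyclic permutation of the other or of its
reversal. -/
def TupleEquiv (l l' : List A) : Prop :=
  List.IsRotated l l' ∨ List.IsRotated l.reverse l'

/-- A λ-quiddity `c` is reducible if `c ∼ a ⊕ b` with `b` a λ-quiddity and both of size ≥ 3. -/
def QuiddityReducible (c : List A) : Prop :=
  ∃ a b : List A, 3 ≤ a.length ∧ 3 ≤ b.length ∧ IsQuiddity b ∧ TupleEquiv c (oplus a b)

/-- `(a, b, a, b, …, a, b)` with `k` repetitions of the pair `(a, b)` (size `2k`). -/
def dynList : ℕ → A → A → List A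
  | 0, _, _ => []
  | k + 1, a, b => a :: b :: dynList k a b

/-- `(u, v, v, u, v, v, …, u, v, v)` with `k` repetitions of the block `(u, v, v)`
(size `3k`). -/
def triList : ℕ → A → A → List A
  | 0, _, _ => []
  | k + 1, a, b => a :: b :: b :: triList k a b

/-!
Put `v = 2⁻¹` and let `2` have order `2k = p - 1`. The product of `j` blocks `(2, v, v)` is upper
triangular with diagonal `(-2)^j, (-v)^j`, so it is `±Id` exactly when `k ∣ j`.

If the quiddity `c` were `a ⊕ b`, then `b` without its two end entries is a nonempty stretch `w`
of the cyclic word `c`, of length at most `|c| - 3`, and `M(b) = ±Id` forces `M(w)₀₀ = ±1`. Every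
such stretch is `S ++ (2, v, v)^j ++ P` with `S` a proper suffix and `P` a proper prefix of the
block, and its `(0,0)` entry is `0` or `±(2^i (-2)^j)^{±1}` with `0 < i + j < k`, hence not `±1`
— except for `S = (v, v)`, `P = ()`, where `M(w)₀₀ = ±1` would make `2 = (2 (-2)^j + M(w)₀₀)²` a
square, which a generator of `(ℤ/pℤ)ˣ` is not.
-/

@[simp]
theorem mMat_nil : mMat ([] : List A) = 1 := rfl

@[simp]
theorem mMat_cons (a : A) (l : List A) : mMat (a :: l) = mMat l * !![a, -1; 1, 0] := rfl

theorem mMat_append (l₁ l₂ : List A) : mMat (l₁ ++ l₂) = mMat l₂ * mMat l₁ := by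
  induction l₁ with
  | nil => simp
  | cons a l ih => simp [ih, mul_assoc]

theorem mMat_cons_append_singleton_one_one (x y : A) (m : List A) :
    mMat (x :: (m ++ [y])) 1 1 = -mMat m 0 0 := by
  simp [mMat_append, Matrix.mul_apply, Matrix.vecMul, dotProduct, Fin.sum_univ_two]

theorem IsQuiddity.mMat_inner_zero_zero {x y : A} {m : List A} (h : IsQuiddity (x :: (m ++ [y]))) :
    mMat m 0 0 = 1 ∨ mMat m 0 0 = -1 := by
  have h11 := mMat_cons_append_singleton_one_one x y m
  rcases h with h | h
  · rw [h, Matrix.one_apply_eq] at h11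
    exact Or.inr (by linear_combination h11)
  · rw [h, Matrix.neg_apply, Matrix.one_apply_eq] at h11
    exact Or.inl (by linear_combination h11)

theorem mMat_reverse (l : List A) :
    mMat l.reverse = !![1, 0; 0, -1] * (mMat l).transpose * !![1, 0; 0, -1] := by
  induction l with
  | nil => ext i j; fin_cases i <;> fin_cases j <;> simp
  | cons a l ih =>
    rw [List.reverse_cons, mMat_append, ih, mMat_cons, mMat_cons, mMat_nil, Matrix.one_mul,
      Matrix.transpose_mul]
    ext i j
    fin_cases i <;> fin_cases j <;>
      simp [Matrix.mul_apply, Matrix.vecMul, dotProduct, Fin.sum_univ_two]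
    ring

theorem mMat_reverse_zero_zero (l : List A) : mMat l.reverse 0 0 = mMat l 0 0 := by
  simp [mMat_reverse, Matrix.mul_apply, Matrix.vecMul, dotProduct, Fin.sum_univ_two]

theorem mMat_triList {u v : A} (huv : u * v = 1) (j : ℕ) :
    mMat (triList j u v) = !![(-u) ^ j, v * ((-v) ^ j - (-u) ^ j); 0, (-v) ^ j] := by
  induction j with
  | zero => ext i j; fin_cases i <;> fin_cases j <;> simp [triList]
  | succ n ih =>
    simp only [triList, mMat_cons, ih]
    ext i j
    fin_cases i <;> fin_cases j <;> simp [Matrix.mul_apply, Fin.sum_univ_two]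
    · linear_combination v * (-v) ^ n * huv
    · linear_combination -(-u) ^ n * huv
    · linear_combination (-v) ^ n * huv
    · ring

theorem isQuiddity_triList_iff {u v : A} (huv : u * v = 1) (j : ℕ) :
    IsQuiddity (triList j u v) ↔ (-u) ^ j = 1 ∨ (-u) ^ j = -1 := by
  have hinv : (-u) ^ j * (-v) ^ j = 1 := by rw [← mul_pow, neg_mul_neg, huv, one_pow]
  rw [IsQuiddity, mMat_triList huv]
  constructor
  · rintro (h | h)
    · left; simpa using congrFun₂ h 0 0
    · right; simpa using congrFun₂ h 0 0
  · rintro (h | h)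
    · have hv : (-v) ^ j = 1 := by simpa [h] using hinv
      left; ext i j; fin_cases i <;> fin_cases j <;> simp [h, hv]
    · have hv : (-v) ^ j = -1 := by linear_combination -hinv + (-v) ^ j * h
      right; ext i j; fin_cases i <;> fin_cases j <;> simp [h, hv]

theorem triList_length {α : Type*} (j : ℕ) (a b : α) : (triList j a b).length = 3 * j := by
  induction j with
  | zero => rfl
  | succ n ih => simp [triList, ih]; ring

theorem triList_add {α : Type*} (i j : ℕ) (a b : α) :
    triList (i + j) a b = triList i a b ++ triList j a b := by
  induction i with
  | zero => simp [triList]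
  | succ n ih => simp [triList, Nat.succ_add, ih]

theorem exists_eq_triList_append_of_prefix {α : Type*} {a b : α} {m : ℕ} {q : List α}
    (h : q <+: triList m a b) : ∃ j, ∃ P ∈ [[], [a], [a, b]], q = triList j a b ++ P := by
  induction m generalizing q with
  | zero => exact ⟨0, [], by simp_all [triList]⟩
  | succ n ih =>
    rw [triList, List.prefix_cons_iff] at h
    rcases h with rfl | ⟨q, rfl, h⟩
    · exact ⟨0, [], by simp [triList]⟩
    rw [List.prefix_cons_iff] at h
    rcases h with rfl | ⟨q, rfl, h⟩
    · exact ⟨0, [a], by simp [triList]⟩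
    rw [List.prefix_cons_iff] at h
    rcases h with rfl | ⟨q, rfl, h⟩
    · exact ⟨0, [a, b], by simp [triList]⟩
    obtain ⟨j, P, hP, rfl⟩ := ih h
    exact ⟨j + 1, P, hP, by simp [triList]⟩

theorem exists_eq_append_triList_of_suffix {α : Type*} {a b : α} {m : ℕ} {s : List α}
    (h : s <:+ triList m a b) : ∃ j, ∃ S ∈ [[], [b], [b, b]], s = S ++ triList j a b := by
  induction m with
  | zero => exact ⟨0, [], by simp_all [triList]⟩
  | succ n ih =>
    simp only [triList, List.suffix_cons_iff] at h
    rcases h with rfl | rfl | rfl | h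
    · exact ⟨n + 1, [], by simp [triList]⟩
    · exact ⟨n, [b, b], by simp⟩
    · exact ⟨n, [b], by simp⟩
    · exact ih h

theorem exists_eq_append_triList_append_of_infix {α : Type*} {a b : α} {m : ℕ} {w : List α}
    (h : w <:+: triList m a b) :
    ∃ j, ∃ S ∈ [[], [b], [b, b]], ∃ P ∈ [[], [a], [a, b]], w = S ++ triList j a b ++ P := by
  obtain ⟨s, hws, hs⟩ := List.infix_iff_prefix_suffix.mp h
  obtain ⟨j, S, hS, rfl⟩ := exists_eq_append_triList_of_suffix hs
  have of_prefix : ∀ S' ∈ [[], [b], [b, b]], ∀ {q}, q <+: triList j a b →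
      ∃ j, ∃ S ∈ [[], [b], [b, b]], ∃ P ∈ [[], [a], [a, b]], S' ++ q = S ++ triList j a b ++ P := by
    intro S' hS' q hq
    obtain ⟨j, P, hP, rfl⟩ := exists_eq_triList_append_of_prefix hq
    exact ⟨j, S', hS', P, hP, by simp⟩
  have nil_mem :
      ∃ j, ∃ S ∈ [[], [b], [b, b]], ∃ P ∈ [[], [a], [a, b]], [] = S ++ triList j a b ++ P :=
    ⟨0, [], by simp, [], by simp, by simp [triList]⟩
  simp only [List.mem_cons, List.not_mem_nil, or_false] at hS
  rcases hS with rfl | rfl | rfl <;> simp only [List.cons_append, List.nil_append] at hws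
  · simpa using of_prefix [] (by simp) hws
  · rcases List.prefix_cons_iff.mp hws with rfl | ⟨q, rfl, hq⟩
    · exact nil_mem
    · exact of_prefix [b] (by simp) hq
  · rcases List.prefix_cons_iff.mp hws with rfl | ⟨q, rfl, hq⟩
    · exact nil_mem
    rcases List.prefix_cons_iff.mp hq with rfl | ⟨q', rfl, hq'⟩
    · exact ⟨0, [b], by simp, [], by simp, by simp [triList]⟩
    · exact of_prefix [b, b] (by simp) hq'

theorem isInfix_append_self_of_isRotated {α : Type*} {l l' : List α} (h : l ~r l') :
    l' <:+: l ++ l := by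
  obtain ⟨n, rfl⟩ := h
  rw [List.rotate_eq_drop_append_take_mod]
  exact ⟨l.take (n % l.length), l.drop (n % l.length), by
    rw [List.append_assoc, List.append_assoc, List.take_append_drop, ← List.append_assoc,
      List.take_append_drop]⟩

theorem isSuffix_oplus (a : List A) (x y : A) (m : List A) : m <:+ oplus a (x :: (m ++ [y])) :=
  ⟨(a.headD 0 + (x :: (m ++ [y])).getLastD 0) :: (a.tail.dropLast ++ [a.getLastD 0 + x]),
    by simp [oplus]⟩

theorem length_oplus {a : List A} (ha : 2 ≤ a.length) (x y : A) (m : List A) :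
    (oplus a (x :: (m ++ [y]))).length = a.length + m.length := by
  simp [oplus]
  omega

theorem QuiddityReducible.exists_short_infix {c : List A} (h : QuiddityReducible c) :
    ∃ w : List A, w ≠ [] ∧ w.length + 3 ≤ c.length ∧ w <:+: c ++ c ∧
      (mMat w 0 0 = 1 ∨ mMat w 0 0 = -1) := by
  obtain ⟨a, b, ha, hb, hbq, hc⟩ := h
  obtain ⟨x, m, y, rfl⟩ : ∃ x m y, b = x :: (m ++ [y]) := by
    rcases b with _ | ⟨x, b⟩
    · simp at hb
    rcases List.eq_nil_or_concat b with rfl | ⟨m, y, rfl⟩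
    · simp at hb
    exact ⟨x, m, y, by simp⟩
  have hm : m ≠ [] := by rintro rfl; simp at hb
  have hlen := length_oplus (by omega : 2 ≤ a.length) x y m
  rcases hc with hc | hc
  · refine ⟨m, hm, ?_, (isSuffix_oplus a x y m).isInfix.trans
      (isInfix_append_self_of_isRotated hc), hbq.mMat_inner_zero_zero⟩
    rw [hc.perm.length_eq]
    omega
  · refine ⟨m.reverse, by simpa using hm, ?_, ?_, ?_⟩
    · rw [List.length_reverse, ← List.length_reverse (as := c), hc.perm.length_eq]
      omega
    · have := (isSuffix_oplus a x y m).isInfix.trans (isInfix_append_self_of_isRotated hc)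
      rw [← List.reverse_append] at this
      simpa using List.reverse_infix.mpr this
    · rw [mMat_reverse_zero_zero]
      exact hbq.mMat_inner_zero_zero

section Field

variable {F : Type*} [Field F] {k : ℕ}

theorem orderOf_two_sq (hord : orderOf (2 : F) = 2 * k) : orderOf ((2 : F) ^ 2) = k := by
  rw [orderOf_pow' _ two_ne_zero, hord, Nat.gcd_mul_right_left]
  simp

theorem two_ne_zero_of_orderOf_two (hk : 0 < k) (hord : orderOf (2 : F) = 2 * k) : (2 : F) ≠ 0 := by
  intro h
  have := pow_orderOf_eq_one (2 : F)
  rw [hord, h, zero_pow (by omega)] at this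
  exact zero_ne_one this

theorem isQuiddity_triList_two_iff (hk : 0 < k) (hord : orderOf (2 : F) = 2 * k) (j : ℕ) :
    IsQuiddity (triList j (2 : F) 2⁻¹) ↔ k ∣ j := by
  rw [isQuiddity_triList_iff (mul_inv_cancel₀ (two_ne_zero_of_orderOf_two hk hord)),
    ← sq_eq_one_iff, ← pow_mul, mul_comm, pow_mul, neg_sq, ← orderOf_two_sq hord,
    orderOf_dvd_iff_pow_eq_one]

theorem sq_two_pow_mul_neg_two_pow_ne_one (hord : orderOf (2 : F) = 2 * k) {i j : ℕ}
    (hij : i + j ≠ 0) (hk : i + j < k) : ((2 : F) ^ i * (-2) ^ j) ^ 2 ≠ 1 := by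
  rw [mul_pow, ← pow_mul, ← pow_mul, mul_comm i, mul_comm j, pow_mul, pow_mul, neg_sq, ← pow_add]
  exact pow_ne_one_of_lt_orderOf hij (by rwa [orderOf_two_sq hord])

theorem mMat_triList_two (h2 : (2 : F) ≠ 0) (j : ℕ) :
    mMat (triList j (2 : F) 2⁻¹) =
      !![(-2) ^ j, 2⁻¹ * (((-2) ^ j)⁻¹ - (-2) ^ j); 0, ((-2) ^ j)⁻¹] := by
  rw [mMat_triList (mul_inv_cancel₀ h2), neg_inv, inv_pow]

theorem mMat_zero_zero_sq_ne_one_of_isInfix (hord : orderOf (2 : F) = 2 * k)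
    (hsq : ¬IsSquare (2 : F)) {m : ℕ} {w : List F} (hw : w <:+: triList m 2 2⁻¹) (hne : w ≠ [])
    (hlen : w.length + 3 ≤ 3 * k) : (mMat w 0 0) ^ 2 ≠ 1 := by
  have h2 := two_ne_zero_of_orderOf_two (by omega) hord
  obtain ⟨j, S, hS, P, hP, rfl⟩ := exists_eq_append_triList_append_of_infix hw
  have hpow := fun i ↦ sq_two_pow_mul_neg_two_pow_ne_one hord (i := i) (j := j)
  simp only [List.mem_cons, List.not_mem_nil, or_false] at hS hP
  have hy : (-2 : F) ^ j ≠ 0 := pow_ne_zero _ (neg_ne_zero.mpr h2)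
  set x := mMat (S ++ triList j 2 2⁻¹ ++ P) 0 0 with hx_def
  intro hx
  -- nine cases: `S = [], [2⁻¹], [2⁻¹, 2⁻¹]`, each with `P = [], [2], [2, 2⁻¹]`
  rcases hS with rfl | rfl | rfl <;> rcases hP with rfl | rfl | rfl <;>
    simp only [List.length_append, triList_length, List.length_cons, List.length_nil] at hlen <;>
    simp [mMat_append, mMat_triList_two h2, Matrix.mul_apply, Fin.sum_univ_two] at hx_def
  · have hj : j ≠ 0 := by rintro rfl; simp [triList] at hne
    have hE : x = (-2) ^ j := by simpa using hx_def
    exact hpow 0 (by omega) (by omega) (by simpa [hE] using hx)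
  · have hE : x = 2 * (-2) ^ j := by simpa using hx_def
    exact hpow 1 (by omega) (by omega) (by simpa [hE] using hx)
  · have hE : x = 0 := by simpa [h2] using hx_def
    simp [hE] at hx
  · have hE : x = (2 * (-2) ^ j)⁻¹ := by
      rw [hx_def]; field_simp; ring
    rw [hE, inv_pow, inv_eq_one] at hx
    exact hpow 1 (by omega) (by omega) (by simpa using hx)
  · have hE : x = 0 := by rw [hx_def]; field_simp; ring
    simp [hE] at hx
  · have hE : x = -(2 * (-2) ^ j)⁻¹ := by
      rw [hx_def]; field_simp; ring
    rw [hE, neg_sq, inv_pow, inv_eq_one] at hx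
    exact hpow 1 (by omega) (by omega) (by simpa using hx)
  · have hE : 2 ^ 2 * (-2) ^ j * x = 1 - (2 * (-2) ^ j) ^ 2 := by
      rw [hx_def]; field_simp; ring
    exact hsq ⟨2 * (-2) ^ j + x, by linear_combination -hx - hE⟩
  · have hE : x = -(2 * (-2) ^ j) := by rw [hx_def]; field_simp; ring
    rw [hE, neg_sq] at hx
    exact hpow 1 (by omega) (by omega) (by simpa using hx)
  · have hE : x = -(2 ^ 2 * (-2) ^ j)⁻¹ := by
      rw [hx_def]; field_simp; ring
    rw [hE, neg_sq, inv_pow, inv_eq_one] at hx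
    exact hpow 2 (by omega) (by omega) hx

theorem not_quiddityReducible_triList_two (hord : orderOf (2 : F) = 2 * k)
    (hsq : ¬IsSquare (2 : F)) : ¬QuiddityReducible (triList k (2 : F) 2⁻¹) := by
  intro h
  obtain ⟨w, hne, hlen, hw, hx⟩ := h.exists_short_infix
  rw [← triList_add] at hw
  rw [triList_length] at hlen
  exact mMat_zero_zero_sq_ne_one_of_isInfix hord hsq hw hne hlen (sq_eq_one_iff.mpr hx)

theorem not_isSquare_of_orderOf_eq [Fintype F] (hF : Fintype.card F = 2 * k + 1) {a : F}
    (ha : orderOf a = 2 * k) : ¬IsSquare a := by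
  rintro ⟨r, rfl⟩
  have hk : 0 < k := by have := Fintype.one_lt_card (α := F); omega
  have hr : r ≠ 0 := by rintro rfl; rw [mul_zero, orderOf_zero] at ha; omega
  have hsq : (r * r) ^ k = 1 := by
    rw [← sq, ← pow_mul, ← FiniteField.pow_card_sub_one_eq_one r hr, hF, Nat.add_sub_cancel]
  exact pow_ne_one_of_lt_orderOf (by omega) (by omega) hsq

end Field

end Quiddity

open Quiddity

/-- if the class of 2 generates `(ℤ/pℤ)*` (`p` an odd prime), then the
`2`-trinomial minimal solution is an irreducible λ-quiddity of size `3(p−1)/2`. -/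
theorem stmt17 (p : ℕ) (hp : p.Prime) (hodd : Odd p)
    (hgen : ∃ w : (ZMod p)ˣ, (w : ZMod p) = 2 ∧
      ∀ v : (ZMod p)ˣ, v ∈ Subgroup.zpowers w) :
    ∃ k : ℕ, 0 < k ∧
      IsQuiddity (triList k (2 : ZMod p) (2 : ZMod p)⁻¹) ∧
      (∀ j, 0 < j → IsQuiddity (triList j (2 : ZMod p) (2 : ZMod p)⁻¹) → k ≤ j) ∧
      ¬ QuiddityReducible (triList k (2 : ZMod p) (2 : ZMod p)⁻¹) ∧
      (triList k (2 : ZMod p) (2 : ZMod p)⁻¹).length = 3 * (p - 1) / 2 := by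
  have : Fact p.Prime := ⟨hp⟩
  obtain ⟨w, hw2, hw⟩ := hgen
  obtain ⟨k, hpk⟩ := hodd
  have hk : 0 < k := by have := hp.two_le; omega
  have hord : orderOf (2 : ZMod p) = 2 * k := by
    rw [← hw2, orderOf_units, orderOf_eq_card_of_forall_mem_zpowers hw, Nat.card_eq_fintype_card,
      ZMod.card_units, hpk, Nat.add_sub_cancel]
  have hsq : ¬IsSquare (2 : ZMod p) := not_isSquare_of_orderOf_eq (by rw [ZMod.card, hpk]) hord
  have hquid := isQuiddity_triList_two_iff hk hord
  refine ⟨k, hk, (hquid k).mpr dvd_rfl, fun j hj hq => Nat.le_of_dvd hj ((hquid j).mp hq),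
    not_quiddityReducible_triList_two hord hsq, ?_⟩
  rw [triList_length]
  omega
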